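/- Let q : (G,P) → (H,Q) be a quasi-isometry of pairs where P and Q are finite collections, Q is reduced, and every Q ∈ Q has finite index in its commensurator Comm_H(Q). Then every P ∈ P has finite index in its commensurator Comm_G(P). -/

import Mathlib

open scoped Pointwise

variable {G : Type*} [Group G]

/-- Word distance between `g` and `h` with respect to a generating set `S` (values in `ℕ∞`). -/
noncomputable def wordDist (S : Set G) (g h : G) : ℕ∞ :=
  sInf {n : ℕ∞ | ∃ l : List G, (∀ x ∈ l, x ∈ S ∨ x⁻¹ ∈ S) ∧ l.prod = g⁻¹ * h ∧ (l.length : ℕ∞) = n}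

/-- Closed `r`-neighbourhood of a subset of `G` in the word metric. -/
def nbhd (S : Set G) (r : ℕ∞) (A : Set G) : Set G := {g | ∃ a ∈ A, wordDist S g a ≤ r}

/-- Hausdorff distance between subsets of `G` in the word metric. -/
noncomputable def hdist (S : Set G) (A B : Set G) : ℕ∞ :=
  sInf {r : ℕ∞ | A ⊆ nbhd S r B ∧ B ⊆ nbhd S r A}

/-- The conjugate subgroup `g P g⁻¹`. -/
def conjSub (g : G) (P : Subgroup G) : Subgroup G := ConjAct.toConjAct g • P

/-- The collection of all left cosets `gP`, `g ∈ G`, `P ∈ Ps`, as subsets of `G`. -/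
def cosetsOf (Ps : Set (Subgroup G)) : Set (Set G) :=
  {A | ∃ (g : G) (P : Subgroup G), P ∈ Ps ∧ A = g • (P : Set G)}

/-- A collection of subgroups is almost malnormal if any conjugate of a member meets any
member in a finite subgroup, except for the trivial configurations. -/
def AlmostMalnormal (Ps : Set (Subgroup G)) : Prop :=
  ∀ P ∈ Ps, ∀ P' ∈ Ps, ∀ g : G,
    ((conjSub g P ⊓ P' : Subgroup G) : Set G).Finite ∨ (P = P' ∧ g ∈ P)

/-- A collection of subgroups is reduced if commensurability of a member with a conjugate of a
member only happens trivially. -/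
def Reduced (Ps : Set (Subgroup G)) : Prop :=
  ∀ P ∈ Ps, ∀ Q ∈ Ps, ∀ g : G, Subgroup.Commensurable P (conjSub g Q) → P = Q ∧ g ∈ P

/-- `q` is an `(L, C, M)`-quasi-isometry of pairs `(G, Ps) → (H, Qs)`: an `(L, C)`-quasi-isometry
of the groups (with respect to the word metrics of `S` and `T`) such that the relation
`{(A, B) : Hdist(q(A), B) < M}` on left cosets projects surjectively to both factors. -/
def IsQIPair {H : Type*} [Group H] (S : Set G) (T : Set H) (q : G → H)
    (Ps : Set (Subgroup G)) (Qs : Set (Subgroup H)) (L C M : ℕ) : Prop :=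
  (∀ a b : G, wordDist T (q a) (q b) ≤ (L : ℕ∞) * wordDist S a b + (C : ℕ∞) ∧
      wordDist S a b ≤ (L : ℕ∞) * wordDist T (q a) (q b) + (C : ℕ∞)) ∧
  (∀ h : H, ∃ g : G, wordDist T (q g) h ≤ (C : ℕ∞)) ∧
  (∀ A ∈ cosetsOf Ps, ∃ B ∈ cosetsOf Qs, hdist T (q '' A) B < (M : ℕ∞)) ∧
  (∀ B ∈ cosetsOf Qs, ∃ A ∈ cosetsOf Ps, hdist T (q '' A) B < (M : ℕ∞))

/-!
For subgroups `A`, `B` and `x ∈ G`, the sets `A` and `xB` are at finite Hausdorff distance exactly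
when `A` and `xBx⁻¹` are commensurable. Hence if `g` commensurates `P`, then `gP` and `P` are at
finite Hausdorff distance, and so are their images under `q` and the cosets of `Qs` that these
images are `M`-close to. In a reduced collection such cosets coincide, so `q(gP)` and `q(P)` are
`2M`-close and `gP` lies within `L·2M + C` of `P`. Thus every such coset `gP` meets a fixed
finite ball, and there are only finitely many of them.
-/

section WordMetric

variable {S : Set G}

lemma wordDist_le_length {g h : G} {l : List G} (hl : ∀ x ∈ l, x ∈ S ∨ x⁻¹ ∈ S)
    (hprod : l.prod = g⁻¹ * h) : wordDist S g h ≤ l.length :=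
  sInf_le ⟨l, hl, hprod, rfl⟩

lemma exists_list_of_wordDist_ne_top {g h : G} (hd : wordDist S g h ≠ ⊤) :
    ∃ l : List G, (∀ x ∈ l, x ∈ S ∨ x⁻¹ ∈ S) ∧ l.prod = g⁻¹ * h ∧
      (l.length : ℕ∞) = wordDist S g h := by
  unfold wordDist at hd ⊢
  refine csInf_mem (s := {n : ℕ∞ | ∃ l : List G, (∀ x ∈ l, x ∈ S ∨ x⁻¹ ∈ S) ∧
    l.prod = g⁻¹ * h ∧ (l.length : ℕ∞) = n}) (Set.nonempty_iff_ne_empty.2 fun he => hd ?_)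
  rw [he, sInf_empty]

lemma wordDist_eq_wordDist_one (g h : G) : wordDist S g h = wordDist S 1 (g⁻¹ * h) := by
  simp [wordDist]

lemma wordDist_mul_left (a g h : G) : wordDist S (a * g) (a * h) = wordDist S g h := by
  rw [wordDist_eq_wordDist_one, wordDist_eq_wordDist_one g, mul_inv_rev, mul_assoc,
    inv_mul_cancel_left]

lemma wordDist_triangle (g h k : G) : wordDist S g k ≤ wordDist S g h + wordDist S h k := by
  rcases eq_or_ne (wordDist S g h) ⊤ with hgh | hgh
  · simp [hgh]
  rcases eq_or_ne (wordDist S h k) ⊤ with hhk | hhk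
  · simp [hhk]
  obtain ⟨l₁, hl₁, hprod₁, hlen₁⟩ := exists_list_of_wordDist_ne_top hgh
  obtain ⟨l₂, hl₂, hprod₂, hlen₂⟩ := exists_list_of_wordDist_ne_top hhk
  rw [← hlen₁, ← hlen₂, ← Nat.cast_add, ← List.length_append]
  refine wordDist_le_length (fun x hx => (List.mem_append.1 hx).elim (hl₁ x) (hl₂ x)) ?_
  rw [List.prod_append, hprod₁, hprod₂]
  group

lemma wordDist_ne_top (hgen : Subgroup.closure S = ⊤) (g h : G) : wordDist S g h ≠ ⊤ := by
  have hmem : g⁻¹ * h ∈ Submonoid.closure (S ∪ S⁻¹) := by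
    rw [← Subgroup.closure_toSubmonoid, hgen]
    trivial
  obtain ⟨l, hl, hprod⟩ := Submonoid.exists_list_of_mem_closure hmem
  exact ne_top_of_le_ne_top (ENat.natCast_ne_top _)
    (wordDist_le_length (fun x hx => hl x hx) hprod)

lemma finite_setOf_wordDist_one_le (hS : S.Finite) (n : ℕ) :
    {g : G | wordDist S 1 g ≤ n}.Finite := by
  have : Finite ↥(S ∪ S⁻¹) := (hS.union hS.inv).to_subtype
  refine ((List.finite_length_le ↥(S ∪ S⁻¹) n).image fun l => (l.map (↑)).prod).subset ?_
  intro g hg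
  obtain ⟨l, hl, hprod, hlen⟩ :=
    exists_list_of_wordDist_ne_top (ne_top_of_le_ne_top (ENat.natCast_ne_top n) hg)
  lift l to List ↥(S ∪ S⁻¹) using fun x hx => hl x hx
  refine ⟨l, ?_, by simpa using hprod⟩
  rw [Set.mem_ofPred_eq, ← hlen, List.length_map] at hg
  exact_mod_cast hg

lemma exists_forall_wordDist_one_le (hgen : Subgroup.closure S = ⊤) {F : Set G}
    (hF : F.Finite) : ∃ n : ℕ, ∀ f ∈ F, wordDist S 1 f ≤ n := by
  obtain ⟨n, hn⟩ := (hF.image fun f => (wordDist S 1 f).toNat).bddAbove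
  refine ⟨n, fun f hf => ?_⟩
  rw [← ENat.natCast_toNat (wordDist_ne_top hgen 1 f)]
  exact_mod_cast hn (Set.mem_image_of_mem _ hf)

end WordMetric

section Hausdorff

variable {S : Set G} {A B D : Set G}

lemma nbhd_mono {r r' : ℕ∞} (h : r ≤ r') : nbhd S r A ⊆ nbhd S r' A :=
  fun _ ⟨a, ha, hd⟩ => ⟨a, ha, hd.trans h⟩

lemma subset_nbhd_trans {r s : ℕ∞} (hAB : A ⊆ nbhd S r B) (hBD : B ⊆ nbhd S s D) :
    A ⊆ nbhd S (r + s) D := by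
  intro a ha
  obtain ⟨b, hb, hab⟩ := hAB ha
  obtain ⟨d, hd, hbd⟩ := hBD hb
  exact ⟨d, hd, (wordDist_triangle a b d).trans (add_le_add hab hbd)⟩

lemma nbhd_smul (r : ℕ∞) (x : G) : nbhd S r (x • B) = x • nbhd S r B := by
  ext g
  rw [Set.mem_smul_set_iff_inv_smul_mem, smul_eq_mul]
  constructor
  · rintro ⟨_, ⟨b, hb, rfl⟩, hd⟩
    exact ⟨b, hb, by rwa [← wordDist_mul_left x, mul_inv_cancel_left]⟩
  · rintro ⟨b, hb, hd⟩
    exact ⟨x • b, Set.smul_mem_smul_set hb, by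
      rwa [← wordDist_mul_left x, mul_inv_cancel_left] at hd⟩

lemma hdist_comm : hdist S A B = hdist S B A := by
  simp only [hdist, and_comm]

lemma hdist_le_iff {r : ℕ∞} (hr : r ≠ ⊤) :
    hdist S A B ≤ r ↔ A ⊆ nbhd S r B ∧ B ⊆ nbhd S r A := by
  refine ⟨fun h => ?_, fun h => sInf_le h⟩
  have hne : {r : ℕ∞ | A ⊆ nbhd S r B ∧ B ⊆ nbhd S r A}.Nonempty :=
    Set.nonempty_iff_ne_empty.2 fun he => hr (top_le_iff.1 (by rwa [hdist, he, sInf_empty] at h))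
  obtain ⟨hAB, hBA⟩ := csInf_mem hne
  exact ⟨hAB.trans (nbhd_mono h), hBA.trans (nbhd_mono h)⟩

lemma hdist_triangle : hdist S A D ≤ hdist S A B + hdist S B D := by
  rcases eq_or_ne (hdist S A B) ⊤ with hAB | hAB
  · simp [hAB]
  rcases eq_or_ne (hdist S B D) ⊤ with hBD | hBD
  · simp [hBD]
  obtain ⟨hAB₁, hAB₂⟩ := (hdist_le_iff hAB).1 le_rfl
  obtain ⟨hBD₁, hBD₂⟩ := (hdist_le_iff hBD).1 le_rfl
  exact sInf_le ⟨subset_nbhd_trans hAB₁ hBD₁,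
    add_comm (hdist S A B) _ ▸ subset_nbhd_trans hBD₂ hAB₂⟩

lemma hdist_lt_top_iff :
    hdist S A B < ⊤ ↔ (∃ n : ℕ, A ⊆ nbhd S n B) ∧ ∃ n : ℕ, B ⊆ nbhd S n A := by
  constructor
  · intro h
    obtain ⟨hAB, hBA⟩ := (hdist_le_iff h.ne).1 le_rfl
    lift hdist S A B to ℕ using h.ne with n
    exact ⟨⟨n, hAB⟩, ⟨n, hBA⟩⟩
  · rintro ⟨⟨m, hm⟩, ⟨n, hn⟩⟩
    have hle : hdist S A B ≤ (max m n : ℕ) := (hdist_le_iff (ENat.natCast_ne_top _)).2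
      ⟨hm.trans (nbhd_mono (by exact_mod_cast le_max_left m n)),
        hn.trans (nbhd_mono (by exact_mod_cast le_max_right m n))⟩
    exact hle.trans_lt (ENat.natCast_lt_top _)

lemma hdist_smul (x : G) : hdist S (x • A) (x • B) = hdist S A B := by
  simp only [hdist, nbhd_smul, Set.smul_set_subset_smul_set_iff]

end Hausdorff

section CoarseMaps

variable {H : Type*} [Group H] {S : Set G} {T : Set H} {q : G → H} {L C : ℕ∞} {A B : Set G}

lemma image_subset_nbhd_image (hq : ∀ a b, wordDist T (q a) (q b) ≤ L * wordDist S a b + C)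
    {r : ℕ∞} (h : A ⊆ nbhd S r B) : q '' A ⊆ nbhd T (L * r + C) (q '' B) := by
  rintro _ ⟨a, ha, rfl⟩
  obtain ⟨b, hb, hd⟩ := h ha
  exact ⟨q b, Set.mem_image_of_mem q hb, (hq a b).trans (by gcongr)⟩

lemma subset_nbhd_of_image_subset_nbhd
    (hq : ∀ a b, wordDist S a b ≤ L * wordDist T (q a) (q b) + C) {r : ℕ∞}
    (h : q '' A ⊆ nbhd T r (q '' B)) : A ⊆ nbhd S (L * r + C) B := by
  intro a ha
  obtain ⟨_, ⟨b, hb, rfl⟩, hd⟩ := h (Set.mem_image_of_mem q ha)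
  exact ⟨b, hb, (hq a b).trans (by gcongr)⟩

lemma hdist_image_le (hq : ∀ a b, wordDist T (q a) (q b) ≤ L * wordDist S a b + C)
    (h : hdist S A B ≠ ⊤) : hdist T (q '' A) (q '' B) ≤ L * hdist S A B + C :=
  have ⟨hAB, hBA⟩ := (hdist_le_iff h).1 le_rfl
  sInf_le ⟨image_subset_nbhd_image hq hAB, image_subset_nbhd_image hq hBA⟩

lemma hdist_le_of_image (hq : ∀ a b, wordDist S a b ≤ L * wordDist T (q a) (q b) + C)
    (h : hdist T (q '' A) (q '' B) ≠ ⊤) : hdist S A B ≤ L * hdist T (q '' A) (q '' B) + C :=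
  have ⟨hAB, hBA⟩ := (hdist_le_iff h).1 le_rfl
  sInf_le ⟨subset_nbhd_of_image_subset_nbhd hq hAB, subset_nbhd_of_image_subset_nbhd hq hBA⟩

end CoarseMaps

lemma Subgroup.relIndex_ne_zero_iff_exists_finite_subset_mul {D K : Subgroup G} :
    D.relIndex K ≠ 0 ↔ ∃ F : Set G, F.Finite ∧ (K : Set G) ⊆ (D : Set G) * F := by
  rw [relIndex, index_ne_zero_iff_finite]
  constructor
  · intro hfin
    refine ⟨Set.range fun z : K ⧸ D.subgroupOf K => ((z.out : K) : G)⁻¹, Set.finite_range _,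
      fun k hk => ?_⟩
    set z : K ⧸ D.subgroupOf K := QuotientGroup.mk ⟨k, hk⟩⁻¹
    have hz : z.out⁻¹ * ⟨k, hk⟩⁻¹ ∈ D.subgroupOf K := QuotientGroup.eq.1 (QuotientGroup.out_eq' z)
    rw [mem_subgroupOf] at hz
    refine ⟨k * z.out, ?_, _, ⟨z, rfl⟩, mul_inv_cancel_right _ _⟩
    simpa using D.inv_mem hz
  · rintro ⟨F, hF, hKF⟩
    have : Finite F := hF.to_subtype
    have hcover : ∀ z : K ⧸ D.subgroupOf K, ∃ f : F, ((z.out : K) : G)⁻¹ * (f : G)⁻¹ ∈ D := by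
      intro z
      obtain ⟨d, hd, f, hf, hdf⟩ := hKF (K.inv_mem z.out.2)
      exact ⟨⟨f, hf⟩, by simpa [← hdf] using hd⟩
    choose φ hφ using hcover
    refine Finite.of_injective φ fun z₁ z₂ h => ?_
    rw [← QuotientGroup.out_eq' z₁, ← QuotientGroup.out_eq' z₂, QuotientGroup.eq,
      mem_subgroupOf]
    have := D.mul_mem (hφ z₁) (D.inv_mem (hφ z₂))
    rw [h] at this
    simpa [mul_assoc] using this

lemma mem_conjSub {x y : G} {A : Subgroup G} : y ∈ conjSub x A ↔ ∃ a ∈ A, x * a * x⁻¹ = y := by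
  simp [conjSub, Subgroup.mem_smul_pointwise_iff_exists, ConjAct.toConjAct_smul]

lemma relIndex_conjSub_eq (x : G) (A B : Subgroup G) :
    B.relIndex (conjSub x A) = (conjSub x⁻¹ B).relIndex A := by
  rw [← Subgroup.relIndex_pointwise_smul (ConjAct.toConjAct x) (conjSub x⁻¹ B) A, conjSub,
    conjSub, smul_smul, map_inv, mul_inv_cancel, one_smul]

section Commensurability

variable {S : Set G} {A B : Subgroup G} {x : G}

lemma relIndex_conjSub_ne_zero_of_subset_nbhd (hS : S.Finite) {n : ℕ}
    (h : (B : Set G) ⊆ nbhd S n (x • (A : Set G))) : (conjSub x A).relIndex B ≠ 0 := by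
  refine Subgroup.relIndex_ne_zero_iff_exists_finite_subset_mul.2
    ⟨(fun w => x * w⁻¹) '' {w | wordDist S 1 w ≤ n},
      (finite_setOf_wordDist_one_le hS n).image _, fun b hb => ?_⟩
  obtain ⟨_, ⟨a, ha, rfl⟩, hd⟩ := h hb
  rw [wordDist_eq_wordDist_one] at hd
  refine ⟨x * a * x⁻¹, mem_conjSub.2 ⟨a, ha, rfl⟩, _, ⟨_, hd, rfl⟩, ?_⟩
  simp only [smul_eq_mul]
  group

lemma exists_subset_nbhd_of_relIndex_conjSub_ne_zero (hgen : Subgroup.closure S = ⊤)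
    (h : (conjSub x A).relIndex B ≠ 0) : ∃ n : ℕ, (B : Set G) ⊆ nbhd S n (x • (A : Set G)) := by
  obtain ⟨F, hF, hBF⟩ := Subgroup.relIndex_ne_zero_iff_exists_finite_subset_mul.1 h
  obtain ⟨n, hn⟩ := exists_forall_wordDist_one_le hgen (hF.image fun f => f⁻¹ * x)
  refine ⟨n, fun b hb => ?_⟩
  obtain ⟨_, hy, f, hf, rfl⟩ := hBF hb
  obtain ⟨a, ha, rfl⟩ := mem_conjSub.1 hy
  refine ⟨x * a, Set.smul_mem_smul_set ha, ?_⟩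
  rw [wordDist_eq_wordDist_one]
  convert hn _ (Set.mem_image_of_mem _ hf) using 2
  group

lemma commensurable_conjSub_of_hdist_lt_top (hS : S.Finite)
    (h : hdist S (B : Set G) (x • (A : Set G)) < ⊤) : Subgroup.Commensurable B (conjSub x A) := by
  obtain ⟨⟨m, hm⟩, ⟨n, hn⟩⟩ := hdist_lt_top_iff.1 h
  refine ⟨?_, relIndex_conjSub_ne_zero_of_subset_nbhd hS hm⟩
  rw [relIndex_conjSub_eq]
  refine relIndex_conjSub_ne_zero_of_subset_nbhd hS (n := n) ?_
  rwa [← Set.smul_set_subset_smul_set_iff (a := x), ← nbhd_smul, smul_inv_smul]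

lemma hdist_lt_top_of_commensurable (hgen : Subgroup.closure S = ⊤)
    (h : Subgroup.Commensurable B (conjSub x A)) : hdist S (B : Set G) (x • (A : Set G)) < ⊤ := by
  obtain ⟨m, hm⟩ := exists_subset_nbhd_of_relIndex_conjSub_ne_zero hgen h.2
  obtain ⟨n, hn⟩ := exists_subset_nbhd_of_relIndex_conjSub_ne_zero (S := S) hgen
    (relIndex_conjSub_eq x A B ▸ h.1)
  refine hdist_lt_top_iff.2 ⟨⟨m, hm⟩, n, ?_⟩
  rwa [← Set.smul_set_subset_smul_set_iff (a := x⁻¹), ← nbhd_smul, inv_smul_smul]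

end Commensurability

lemma hdist_smul_lt_top_of_mem_commensurator {S : Set G} (hgen : Subgroup.closure S = ⊤)
    {P : Subgroup G} {g : G} (hg : g ∈ Subgroup.Commensurable.commensurator P) :
    hdist S (g • (P : Set G)) P < ⊤ := by
  rw [hdist_comm]
  exact hdist_lt_top_of_commensurable hgen hg.symm

lemma relIndex_ne_zero_of_forall_hdist_smul_le {S : Set G} (hS : S.Finite) {P K : Subgroup G}
    {n : ℕ} (h : ∀ g ∈ K, hdist S (g • (P : Set G)) P ≤ n) : P.relIndex K ≠ 0 := by
  have hK : (K : Set G) ⊆ nbhd S n ((1 : G) • (P : Set G)) := fun g hg => by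
    rw [one_smul]
    exact ((hdist_le_iff (ENat.natCast_ne_top n)).1 (h g hg)).1 ⟨1, P.one_mem, mul_one g⟩
  simpa [conjSub] using relIndex_conjSub_ne_zero_of_subset_nbhd hS hK

lemma Reduced.eq_of_hdist_lt_top {S : Set G} (hS : S.Finite) {Qs : Set (Subgroup G)}
    (hred : Reduced Qs) {A B : Set G} (hA : A ∈ cosetsOf Qs) (hB : B ∈ cosetsOf Qs)
    (h : hdist S A B < ⊤) : A = B := by
  obtain ⟨x, Q, hQ, rfl⟩ := hA
  obtain ⟨y, Q', hQ', rfl⟩ := hB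
  rw [← hdist_smul x⁻¹, inv_smul_smul, smul_smul] at h
  obtain ⟨rfl, hxy⟩ := hred Q hQ Q' hQ' _ (commensurable_conjSub_of_hdist_lt_top hS h)
  exact (leftCoset_eq_iff Q).2 hxy

lemma IsQIPair.hdist_le_of_ne_top {H : Type*} [Group H] {S : Set G} {T : Set H} {q : G → H}
    {Ps : Set (Subgroup G)} {Qs : Set (Subgroup H)} {L C M : ℕ}
    (hq : IsQIPair S T q Ps Qs L C M) (hT : T.Finite) (hred : Reduced Qs) {A A' : Set G}
    (hA : A ∈ cosetsOf Ps) (hA' : A' ∈ cosetsOf Ps) (h : hdist S A A' ≠ ⊤) :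
    hdist S A A' ≤ (L * (M + M) + C : ℕ) := by
  obtain ⟨B, hB, hAB⟩ := hq.2.2.1 A hA
  obtain ⟨B', hB', hB'close⟩ := hq.2.2.1 A' hA'
  rw [hdist_comm] at hB'close
  have himage : hdist T (q '' A) (q '' A') ≠ ⊤ := by
    refine ne_top_of_le_ne_top ?_ (hdist_image_le (fun a b => (hq.1 a b).1) h)
    lift hdist S A A' to ℕ using h with n
    exact_mod_cast ENat.natCast_ne_top _
  have hB'B : B' = B := hred.eq_of_hdist_lt_top hT hB' hB <| calc
    hdist T B' B ≤ hdist T B' (q '' A') + hdist T (q '' A') (q '' A) + hdist T (q '' A) B :=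
      (hdist_triangle (B := q '' A)).trans (add_le_add hdist_triangle le_rfl)
    _ < ⊤ := ENat.add_lt_top.2 ⟨ENat.add_lt_top.2 ⟨hB'close.trans (ENat.natCast_lt_top M),
        (hdist_comm (S := T) ▸ himage).lt_top⟩, hAB.trans (ENat.natCast_lt_top M)⟩
  subst hB'B
  calc hdist S A A' ≤ L * hdist T (q '' A) (q '' A') + C :=
        hdist_le_of_image (fun a b => (hq.1 a b).2) himage
    _ ≤ L * (M + M) + C := by
        gcongr
        exact hdist_triangle.trans (add_le_add hAB.le hB'close.le)
    _ = _ := by push_cast; ring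

theorem finite_index_in_commensurator_of_qiPair_general {H : Type*} [Group H]
    (S : Set G) (hS : S.Finite) (hgenS : Subgroup.closure S = ⊤)
    (T : Set H) (hT : T.Finite)
    (q : G → H) (Ps : Set (Subgroup G)) (Qs : Set (Subgroup H)) (L C M : ℕ)
    (hq : IsQIPair S T q Ps Qs L C M) (hred : Reduced Qs) :
    ∀ P ∈ Ps, P.relIndex (Subgroup.Commensurable.commensurator P) ≠ 0 := by
  intro P hP
  have hPcoset : (P : Set G) ∈ cosetsOf Ps := ⟨1, P, hP, (one_smul _ _).symm⟩
  exact relIndex_ne_zero_of_forall_hdist_smul_le hS fun g hg =>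
    hq.hdist_le_of_ne_top hT hred ⟨g, P, hP, rfl⟩ hPcoset
      (hdist_smul_lt_top_of_mem_commensurator hgenS hg).ne

/-- If `q : (G, Ps) → (H, Qs)` is a quasi-isometry of pairs of finite
collections, `Qs` is reduced, and every member of `Qs` has finite index in its commensurator,
then every member of `Ps` has finite index in its commensurator. -/
theorem finite_index_in_commensurator_of_qiPair {H : Type*} [Group H]
    (S : Set G) (hS : S.Finite) (hgenS : Subgroup.closure S = ⊤)
    (T : Set H) (hT : T.Finite) (hgenT : Subgroup.closure T = ⊤)
    (q : G → H) (Ps : Set (Subgroup G)) (Qs : Set (Subgroup H)) (L C M : ℕ)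
    (hPs : Ps.Finite) (hQs : Qs.Finite)
    (hq : IsQIPair S T q Ps Qs L C M) (hred : Reduced Qs)
    (hQfi : ∀ Q ∈ Qs, Q.relIndex (Subgroup.Commensurable.commensurator Q) ≠ 0) :
    ∀ P ∈ Ps, P.relIndex (Subgroup.Commensurable.commensurator P) ≠ 0 :=
  finite_index_in_commensurator_of_qiPair_general S hS hgenS T hT q Ps Qs L C M hq hred
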